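/- arXiv:2505.04296 — 3 statements merged into one kernel-verified Lean document; each statement's English description precedes it below -/
import Mathlib

section
/- Let M_1, …, M_m and N_1, …, N_{m-1} be n×n complex matrices. The determinant of the block matrix whose first block row is (M_1, M_2, …, M_m), with −I_n on the subdiagonal, N_j in position (j+1, j+1) for j = 1,…,m−1, and zeros elsewhere, equals det(M_1·N_1⋯N_{m-1} + M_2·N_2⋯N_{m-1} + ⋯ + M_{m-1}·N_{m-1} + M_m). -/
/-!
Swapping the first two block rows puts `-I` in the top left corner. Its Schur complement is a
block matrix of the same shape with one block fewer, with first block row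
`(M₁ N₁ + M₂, M₃, …, Mₘ)` and diagonal `N₂, …, Nₘ₋₁`: one Horner step for the sum
`∑ Mᵢ Nᵢ ⋯ Nₘ₋₁`. The signs `(-1)ⁿ` of the row swap and of `det (-I)` cancel, so induction on `m`
concludes.
-/

open Matrix

section AscProd

variable {α : Type*} [Monoid α]

def ascProd (N : ℕ → α) (a l : ℕ) : α := ((List.range l).map fun k => N (a + k)).prod

theorem ascProd_zero (N : ℕ → α) (a : ℕ) : ascProd N a 0 = 1 := rfl

theorem ascProd_succ (N : ℕ → α) (a l : ℕ) :
    ascProd N a (l + 1) = N a * ascProd N (a + 1) l := by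
  simp only [ascProd, List.prod_range_succ', add_zero, add_assoc, add_comm 1]

theorem ascProd_shift (N : ℕ → α) (a l : ℕ) :
    ascProd (fun k => N (k + 1)) a l = ascProd N (a + 1) l := by
  simp only [ascProd, add_right_comm a]

end AscProd

section HornerSum

variable {R : Type*} [Semiring R] {n : ℕ}

def hornerSum {m : ℕ} (M : Fin m → Matrix (Fin n) (Fin n) R)
    (N : ℕ → Matrix (Fin n) (Fin n) R) : Matrix (Fin n) (Fin n) R :=
  ∑ i : Fin m, M i * ascProd N (i + 1) (m - 1 - i)

theorem hornerSum_succ {m : ℕ} (M : Fin (m + 1) → Matrix (Fin n) (Fin n) R)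
    (N : ℕ → Matrix (Fin n) (Fin n) R) :
    hornerSum M N = M 0 * ascProd N 1 m + hornerSum (Fin.tail M) (fun k => N (k + 1)) := by
  simp only [hornerSum, Fin.sum_univ_succ, ascProd_shift, Fin.val_zero, Fin.val_succ, Fin.tail]
  congr 2
  funext i
  congr 2
  omega

theorem hornerSum_merge {m : ℕ} (M : Fin (m + 2) → Matrix (Fin n) (Fin n) R)
    (N : ℕ → Matrix (Fin n) (Fin n) R) :
    hornerSum M N =
      hornerSum (Fin.cons (M 0 * N 1 + M 1) (Fin.tail (Fin.tail M))) (fun k => N (k + 1)) := by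
  rw [hornerSum_succ, hornerSum_succ (Fin.tail M), hornerSum_succ (Fin.cons _ _)]
  simp only [Fin.cons_zero, Fin.tail_cons, ascProd_succ, ascProd_shift, Fin.tail,
    Fin.succ_zero_eq_one, Matrix.mul_assoc, Matrix.add_mul, add_assoc]

end HornerSum

theorem det_fromBlocks_neg_one₁₁ {R ι κ : Type*} [CommRing R] [Fintype ι] [DecidableEq ι]
    [Fintype κ] [DecidableEq κ] (B : Matrix ι κ R) (C : Matrix κ ι R) (D : Matrix κ κ R) :
    (fromBlocks (-1) B C D).det = (-1) ^ Fintype.card ι * (D + C * B).det := by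
  let := invertibleOne (α := Matrix ι ι R)
  let := invertibleNeg (1 : Matrix ι ι R)
  rw [det_fromBlocks₁₁, invOf_neg, invOf_one, det_neg, det_one, mul_one, Matrix.mul_neg,
    Matrix.mul_one, Matrix.neg_mul, sub_neg_eq_add]

def succProdEquiv (m n : ℕ) : Fin n ⊕ Fin (m + 1) × Fin n ≃ Fin (m + 2) × Fin n :=
  optionProdEquiv.symm.trans ((finSuccEquiv (m + 1)).symm.prodCongr (Equiv.refl _))

@[simp]
theorem succProdEquiv_inl {m n : ℕ} (x : Fin n) : succProdEquiv m n (.inl x) = (0, x) := rfl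

@[simp]
theorem succProdEquiv_inr {m n : ℕ} (i : Fin (m + 1)) (x : Fin n) :
    succProdEquiv m n (.inr (i, x)) = (i.succ, x) := by
  simp [succProdEquiv]

def swapFirstBlocks (m n : ℕ) : Equiv.Perm (Fin (m + 2) × Fin n) :=
  Equiv.prodCongrLeft fun _ => Equiv.swap 0 1

theorem sign_swapFirstBlocks (m n : ℕ) : Equiv.Perm.sign (swapFirstBlocks m n) = (-1) ^ n := by
  simp [swapFirstBlocks, Equiv.Perm.sign_prodCongrLeft]

theorem swap_zero_one_succ_succ {m : ℕ} (i : Fin m) :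
    Equiv.swap (0 : Fin (m + 2)) 1 i.succ.succ = i.succ.succ :=
  Equiv.swap_apply_of_ne_of_ne (Fin.succ_ne_zero _) (Fin.succ_succ_ne_one i)

section BlockCompanion

variable {R : Type*} [CommRing R] {n : ℕ}

def blockCompanion {m : ℕ} (M : Fin m → Matrix (Fin n) (Fin n) R)
    (N : ℕ → Matrix (Fin n) (Fin n) R) : Matrix (Fin m × Fin n) (Fin m × Fin n) R :=
  of fun ip jq : Fin m × Fin n =>
    if (ip.1 : ℕ) = 0 then M jq.1 ip.2 jq.2
    else if (ip.1 : ℕ) = (jq.1 : ℕ) + 1 then -(if ip.2 = jq.2 then (1 : R) else 0)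
    else if ip.1 = jq.1 then N (ip.1 : ℕ) ip.2 jq.2
    else 0

def firstBlockCol {m : ℕ} (A : Matrix (Fin n) (Fin n) R) :
    Matrix (Fin (m + 1) × Fin n) (Fin n) R :=
  of fun ip y => if ip.1 = 0 then A ip.2 y else 0

def firstBlockRow {m : ℕ} (B : Matrix (Fin n) (Fin n) R) :
    Matrix (Fin n) (Fin (m + 1) × Fin n) R :=
  of fun x jq => if jq.1 = 0 then B x jq.2 else 0

theorem blockCompanion_swapFirstBlocks_reindex {m : ℕ}
    (M : Fin (m + 2) → Matrix (Fin n) (Fin n) R) (N : ℕ → Matrix (Fin n) (Fin n) R) :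
    ((blockCompanion M N).submatrix (swapFirstBlocks m n) id).submatrix
        (succProdEquiv m n) (succProdEquiv m n) =
      fromBlocks (-1) (firstBlockRow (N 1)) (firstBlockCol (M 0))
        (blockCompanion (Fin.tail M) (fun k => N (k + 1))) := by
  ext (x | ⟨i, x⟩) (y | ⟨j, y⟩) <;>
    simp only [submatrix_apply, succProdEquiv_inl, succProdEquiv_inr, swapFirstBlocks,
      Equiv.prodCongrLeft_apply, id, fromBlocks_apply₁₁, fromBlocks_apply₁₂, fromBlocks_apply₂₁,
      fromBlocks_apply₂₂, blockCompanion, firstBlockRow, firstBlockCol, of_apply]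
  all_goals try rcases Fin.eq_zero_or_eq_succ i with rfl | ⟨i, rfl⟩
  all_goals try rcases Fin.eq_zero_or_eq_succ j with rfl | ⟨j, rfl⟩
  all_goals simp [swap_zero_one_succ_succ, Fin.succ_zero_eq_one, one_apply, Fin.tail,
    Fin.succ_ne_zero, Fin.succ_succ_ne_one, (Fin.succ_succ_ne_one _).symm]

theorem blockCompanion_add_firstBlockCol_mul_firstBlockRow {m : ℕ}
    (M₀ : Matrix (Fin n) (Fin n) R) (M : Fin m → Matrix (Fin n) (Fin n) R)
    (N : ℕ → Matrix (Fin n) (Fin n) R) (A B : Matrix (Fin n) (Fin n) R) :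
    blockCompanion (Fin.cons M₀ M) N + firstBlockCol A * firstBlockRow B =
      blockCompanion (Fin.cons (A * B + M₀) M) N := by
  ext ⟨i, x⟩ ⟨j, y⟩
  rcases Fin.eq_zero_or_eq_succ j with rfl | ⟨j, rfl⟩ <;>
  by_cases hi : i = 0 <;>
    simp [blockCompanion, firstBlockCol, firstBlockRow, mul_apply, hi, add_comm]

theorem det_blockCompanion_succ_succ {m : ℕ} (M : Fin (m + 2) → Matrix (Fin n) (Fin n) R)
    (N : ℕ → Matrix (Fin n) (Fin n) R) :
    (blockCompanion M N).det =
      (blockCompanion (Fin.cons (M 0 * N 1 + M 1) (Fin.tail (Fin.tail M)))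
        (fun k => N (k + 1))).det := by
  have h := det_permute (swapFirstBlocks m n) (blockCompanion M N)
  rw [← det_submatrix_equiv_self (succProdEquiv m n), blockCompanion_swapFirstBlocks_reindex,
    det_fromBlocks_neg_one₁₁, Fintype.card_fin, ← Fin.cons_self_tail (Fin.tail M),
    blockCompanion_add_firstBlockCol_mul_firstBlockRow, sign_swapFirstBlocks] at h
  push_cast at h
  exact ((isUnit_neg_one.pow n).mul_left_cancel h).symm

theorem det_blockCompanion_one (M : Fin 1 → Matrix (Fin n) (Fin n) R)
    (N : ℕ → Matrix (Fin n) (Fin n) R) : (blockCompanion M N).det = (M 0).det := by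
  rw [← det_submatrix_equiv_self (Equiv.uniqueProd (Fin n) (Fin 1)).symm]
  rfl

theorem det_blockCompanion {m : ℕ} (M : Fin (m + 1) → Matrix (Fin n) (Fin n) R)
    (N : ℕ → Matrix (Fin n) (Fin n) R) : (blockCompanion M N).det = (hornerSum M N).det := by
  induction m generalizing N with
  | zero => simp [det_blockCompanion_one, hornerSum, ascProd_zero]
  | succ m ih => rw [det_blockCompanion_succ_succ, ih, ← hornerSum_merge]

end BlockCompanion

theorem statement3 (m n : ℕ) (hm : 0 < m)
    (M : Fin m → Matrix (Fin n) (Fin n) ℂ) (N : ℕ → Matrix (Fin n) (Fin n) ℂ) :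
    Matrix.det (Matrix.of fun ip jq : Fin m × Fin n =>
      if (ip.1 : ℕ) = 0 then M jq.1 ip.2 jq.2
      else if (ip.1 : ℕ) = (jq.1 : ℕ) + 1 then -(if ip.2 = jq.2 then (1 : ℂ) else 0)
      else if ip.1 = jq.1 then N (ip.1 : ℕ) ip.2 jq.2
      else 0)
    = Matrix.det (∑ i : Fin m,
        M i * ((List.range (m - 1 - (i : ℕ))).map fun k => N ((i : ℕ) + 1 + k)).prod) := by
  obtain ⟨m, rfl⟩ := Nat.exists_eq_add_one.mpr hm
  exact det_blockCompanion M N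
end

section
/- For every positive integer n and complex numbers x, y, w, one has p_n(wⁿ; x, y) = det(Aⁿ + (−1)^{n+1}x·I_n), where A = w·I_n − C and C is the Frobenius companion matrix of the polynomial tⁿ − y. -/
open Matrix

noncomputable def pn (n : ℕ) (z x y : ℂ) : ℂ :=
  ∏ r : Fin n, ∏ s : Fin n,
    (z ^ (n : ℂ)⁻¹
      + Complex.exp (2 * Real.pi * Complex.I * ((r : ℕ) + 1) / n) * x ^ (n : ℂ)⁻¹
      + Complex.exp (2 * Real.pi * Complex.I * ((s : ℕ) + 1) / n) * y ^ (n : ℂ)⁻¹)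

/-- The Frobenius companion matrix of the polynomial `t ^ n - c`. -/
def compC (n : ℕ) (c : ℂ) : Matrix (Fin n) (Fin n) ℂ :=
  Matrix.of fun i j =>
    if (i : ℕ) = 0 ∧ (j : ℕ) = n - 1 then c else if (i : ℕ) = (j : ℕ) + 1 then 1 else 0

/-!
For a primitive `n`-th root of unity `ζ`, `∏ r, (a + ζ ^ r * c) = a ^ n + (-1) ^ (n + 1) * c ^ n`.
Applied to the inner product over `s`, this turns `p_n(wⁿ; x, y)` into
`∏ r, ((u + ζ ^ r * x^{1/n}) ^ n + (-1) ^ (n + 1) * y)` with `uⁿ = wⁿ`; rotating `r` shows that the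
choice of the `n`-th root `u` of `wⁿ` does not matter, so `u` may be replaced by `w`.
Applied to the matrix `A`, the same identity factors `Aⁿ + (-1) ^ (n + 1) * x` as
`∏ r, ((w + ζ ^ r * x^{1/n}) • 1 - C)`, and `det (t • 1 - C) = tⁿ - (-1) ^ n * y` is the
characteristic polynomial of the companion matrix.
-/

open Polynomial

theorem prod_comp_pow_add {R M : Type*} [Monoid R] [CommMonoid M] {n : ℕ} [NeZero n]
    {ζ : R} (hζ : ζ ^ n = 1) (f : R → M) (k : ℕ) :
    ∏ r : Fin n, f (ζ ^ ((r : ℕ) + k)) = ∏ r : Fin n, f (ζ ^ (r : ℕ)) := by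
  refine Fintype.prod_equiv (Equiv.addRight (Fin.ofNat n k)) _ _ fun r => ?_
  rw [Equiv.coe_addRight, Fin.val_add, Fin.val_ofNat, Nat.add_mod_mod, ← pow_eq_pow_mod _ hζ]

theorem prod_X_add_C_pow_mul {R : Type*} [CommRing R] [IsDomain R] {n : ℕ} [NeZero n] {ζ : R}
    (hζ : IsPrimitiveRoot ζ n) (c : R) :
    ∏ r : Fin n, (X + C (ζ ^ (r : ℕ) * c)) = X ^ n + C ((-1) ^ (n + 1) * c ^ n) := by
  have h := X_pow_sub_C_eq_prod hζ (Nat.pos_of_neZero n) (rfl : (-c) ^ n = (-c) ^ n)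
  simp only [mul_neg, map_neg, sub_neg_eq_add] at h
  rw [Fin.prod_univ_eq_prod_range (fun r => X + C (ζ ^ r * c)), ← h, ← sub_neg_eq_add, ← map_neg]
  congr 2
  rw [neg_pow, pow_succ]
  ring

theorem prod_add_pow_mul {R : Type*} [CommRing R] [IsDomain R] {n : ℕ} [NeZero n] {ζ : R}
    (hζ : IsPrimitiveRoot ζ n) (a c : R) :
    ∏ r : Fin n, (a + ζ ^ (r : ℕ) * c) = a ^ n + (-1) ^ (n + 1) * c ^ n := by
  simpa [eval_prod] using congrArg (eval a) (prod_X_add_C_pow_mul hζ c)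

theorem prod_comp_add_mul_pow_of_pow_eq {K M : Type*} [Field K] [CommMonoid M] {n : ℕ}
    [NeZero n] {ζ : K} (hζ : IsPrimitiveRoot ζ n) (f : K → M) {a a' : K} (ha : a ^ n = a' ^ n)
    (b : K) :
    ∏ r : Fin n, f ((a + ζ ^ (r : ℕ) * b) ^ n) = ∏ r : Fin n, f ((a' + ζ ^ (r : ℕ) * b) ^ n) := by
  obtain ⟨j, rfl⟩ : ∃ j, a' = ζ ^ j * a := by
    by_cases ha0 : a = 0
    · subst ha0
      exact ⟨0, by simpa [NeZero.ne n, eq_comm] using ha⟩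
    · obtain ⟨j, -, hj⟩ := hζ.eq_pow_of_pow_eq_one (ξ := a' / a)
        (by rw [div_pow, ← ha, div_self (pow_ne_zero n ha0)])
      exact ⟨j, by rw [hj, div_mul_cancel₀ _ ha0]⟩
  rw [← prod_comp_pow_add hζ.pow_eq_one (fun t => f ((ζ ^ j * a + t * b) ^ n)) j]
  refine Fintype.prod_congr _ _ fun r => congrArg f ?_
  have hζj : (ζ ^ j) ^ n = 1 := by rw [← pow_mul, mul_comm, pow_mul, hζ.pow_eq_one, one_pow]
  calc (a + ζ ^ (r : ℕ) * b) ^ n = (ζ ^ j) ^ n * (a + ζ ^ (r : ℕ) * b) ^ n := by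
        rw [hζj, one_mul]
    _ = (ζ ^ j * a + ζ ^ ((r : ℕ) + j) * b) ^ n := by rw [← mul_pow, pow_add]; ring

theorem pn_eq_prod {n : ℕ} [NeZero n] (z x y : ℂ) :
    pn n z x y = ∏ r : Fin n, ∏ s : Fin n,
      (z ^ (n : ℂ)⁻¹ + Complex.exp (2 * Real.pi * Complex.I / n) ^ (r : ℕ) * x ^ (n : ℂ)⁻¹
        + Complex.exp (2 * Real.pi * Complex.I / n) ^ (s : ℕ) * y ^ (n : ℂ)⁻¹) := by
  set ζ := Complex.exp (2 * Real.pi * Complex.I / n)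
  have hζ : ζ ^ n = 1 := (Complex.isPrimitiveRoot_exp n (NeZero.ne n)).pow_eq_one
  have hexp (m : ℕ) : Complex.exp (2 * Real.pi * Complex.I * ((m : ℂ) + 1) / n) = ζ ^ (m + 1) := by
    rw [← Complex.exp_nat_mul]
    congr 1
    push_cast
    ring
  simp only [pn, hexp]
  refine (Fintype.prod_congr _ _ fun r : Fin n =>
    prod_comp_pow_add hζ (fun t => _ + ζ ^ ((r : ℕ) + 1) * _ + t * _) 1).trans ?_
  exact prod_comp_pow_add hζ (fun t => ∏ s : Fin n, (_ + t * _ + ζ ^ (s : ℕ) * _)) 1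

theorem smul_one_sub_compC_apply {n : ℕ} (t c : ℂ) (i j : Fin n) :
    (t • 1 - compC n c) i j = (if (i : ℕ) = j then t else 0)
      - (if (i : ℕ) = 0 ∧ (j : ℕ) = n - 1 then c else if (i : ℕ) = (j : ℕ) + 1 then 1 else 0) := by
  simp [compC, one_apply, Fin.ext_iff]

theorem det_smul_one_sub_compC {n : ℕ} [NeZero n] (t c : ℂ) :
    det (t • (1 : Matrix (Fin n) (Fin n) ℂ) - compC n c) = t ^ n - c := by
  obtain ⟨m, rfl⟩ : ∃ m, n = m + 1 := Nat.exists_eq_succ_of_ne_zero (NeZero.ne n)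
  rcases m with _ | m
  · simp [compC]
  -- The first row is `(t, 0, …, 0, -c)`; deleting it with the first column leaves a
  -- lower-triangular minor with diagonal `t`, and with the last column an upper-triangular
  -- minor with diagonal `-1`.
  rw [det_succ_row_zero, Fintype.sum_eq_add 0 (Fin.last (m + 1)) (by simp [Fin.ext_iff]) ?_]
  · rw [Fin.succAbove_zero, Fin.succAbove_last, det_of_isLowerTriangular _ ?_,
      det_of_isUpperTriangular ?_]
    · simp only [submatrix_apply, smul_one_sub_compC_apply, Fin.val_succ, Fin.val_castSucc,
        Fin.val_last, Fin.val_zero]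
      simp [mul_right_comm _ c, ← mul_pow, pow_succ' t (m + 1), sub_eq_add_neg]
    · intro i j hij
      have : (j : ℕ) < i := hij
      simp only [submatrix_apply, smul_one_sub_compC_apply, Fin.val_succ, Fin.val_castSucc]
      split_ifs <;> first | omega | simp_all
    · intro i j hij
      have : (i : ℕ) < j := hij
      simp only [submatrix_apply, smul_one_sub_compC_apply, Fin.val_succ]
      split_ifs <;> first | omega | simp_all
  · intro j hj
    have h0 : (j : ℕ) ≠ 0 := Fin.val_ne_iff.mpr hj.1
    have hl : (j : ℕ) ≠ m + 1 := fun h => hj.2 (Fin.ext h)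
    rw [smul_one_sub_compC_apply]
    simp [hl, Ne.symm h0]

theorem det_pow_add_smul_one_eq_prod {n : ℕ} [NeZero n] {ζ : ℂ} (hζ : IsPrimitiveRoot ζ n)
    (w b c : ℂ) :
    det ((w • 1 - compC n c) ^ n + ((-1) ^ (n + 1) * b ^ n) • (1 : Matrix (Fin n) (Fin n) ℂ))
      = ∏ r : Fin n, ((w + ζ ^ (r : ℕ) * b) ^ n - c) := by
  let φ : ℂ[X] →* ℂ := detMonoidHom.comp (aeval (w • 1 - compC n c)).toMonoidHom
  have hφ (α : ℂ) : φ (X + C α) = (w + α) ^ n - c := by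
    rw [← det_smul_one_sub_compC, add_smul, add_sub_right_comm]
    simp [φ, Algebra.algebraMap_eq_smul_one]
  have hpow : (w • 1 - compC n c) ^ n + ((-1) ^ (n + 1) * b ^ n) • 1
      = aeval (w • 1 - compC n c) (∏ r : Fin n, (X + C (ζ ^ (r : ℕ) * b))) := by
    rw [prod_X_add_C_pow_mul hζ, map_add, map_pow, aeval_X, aeval_C,
      Algebra.algebraMap_eq_smul_one]
  rw [hpow]
  exact (map_prod φ _ _).trans (Fintype.prod_congr _ _ fun r => hφ _)

theorem statement7 (n : ℕ) (hn : 0 < n) (x y w : ℂ) :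
    pn n (w ^ n) x y
      = Matrix.det ((w • (1 : Matrix (Fin n) (Fin n) ℂ) - compC n ((-1) ^ n * y)) ^ n
          + ((-1) ^ (n + 1) * x) • (1 : Matrix (Fin n) (Fin n) ℂ)) := by
  have : NeZero n := ⟨hn.ne'⟩
  have hζ := Complex.isPrimitiveRoot_exp n hn.ne'
  have hroot (v : ℂ) : (v ^ (n : ℂ)⁻¹) ^ n = v := Complex.cpow_nat_inv_pow v hn.ne'
  set ζ := Complex.exp (2 * Real.pi * Complex.I / n)
  set b := x ^ (n : ℂ)⁻¹
  calc pn n (w ^ n) x y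
      = ∏ r : Fin n, ∏ s : Fin n,
          ((w ^ n) ^ (n : ℂ)⁻¹ + ζ ^ (r : ℕ) * b + ζ ^ (s : ℕ) * y ^ (n : ℂ)⁻¹) :=
        pn_eq_prod _ _ _
    _ = ∏ r : Fin n, (((w ^ n) ^ (n : ℂ)⁻¹ + ζ ^ (r : ℕ) * b) ^ n + (-1) ^ (n + 1) * y) := by
        simp only [prod_add_pow_mul hζ, hroot]
    _ = ∏ r : Fin n, ((w + ζ ^ (r : ℕ) * b) ^ n + (-1) ^ (n + 1) * y) :=
        prod_comp_add_mul_pow_of_pow_eq hζ (· + _) (hroot _) _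
    _ = ∏ r : Fin n, ((w + ζ ^ (r : ℕ) * b) ^ n - (-1) ^ n * y) := by
        simp only [pow_succ, mul_neg_one, neg_mul, sub_eq_add_neg]
    _ = _ := by rw [← det_pow_add_smul_one_eq_prod hζ, hroot]
end

section
/- For every prime n ≥ 5, the sum ∑_{k=1}^{n−1} k·binom(n,k)² is divisible by n⁴. -/
/-!
Write `C(p, k) = p a_k` for `0 < k < p`; the sum is `p² Σ k a_k²`, so it suffices to show
`Σ k a_k² ≡ 0 (mod p²)`. Since `k a_k = C(p-1, k-1) ≡ ±(1 - p H_{k-1}) (mod p²)` with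
`H_j = Σ_{i ≤ j} 1/i`, squaring gives `Σ k a_k² ≡ H - p (H² - Q) (mod p²)`, where
`H = H_{p-1}` and `Q = Σ 1/k²`. Now `Q ≡ 0 (mod p)`, as power sums over `𝔽_p` of exponent
below `p - 1` vanish, and pairing `k` with `p - k` gives
`2H = p Σ 1/(k(p-k)) ≡ -p Q ≡ 0 (mod p²)`.
-/

open Finset

theorem Finset.sum_Ico_sq {R : Type*} [CommRing R] (f : ℕ → R) (a m : ℕ) :
    (∑ k ∈ Ico a m, f k) ^ 2 =
      ∑ k ∈ Ico a m, f k ^ 2 + 2 * ∑ k ∈ Ico a m, f k * ∑ i ∈ Ico a k, f i := by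
  induction m with
  | zero => simp
  | succ m ih =>
    rcases le_or_gt a m with ham | hma
    · rw [sum_Ico_succ_top ham, sum_Ico_succ_top ham, sum_Ico_succ_top ham]
      linear_combination ih
    · simp [Ico_eq_empty_of_le (Nat.succ_le_of_lt hma)]

theorem FiniteField.sum_inv_pow_eq_zero {K : Type*} [Field K] [Fintype K] {i : ℕ}
    (hi : i < Fintype.card K - 1) : ∑ x : K, x⁻¹ ^ i = 0 :=
  (Equiv.sum_comp (Equiv.inv K) (· ^ i)).trans (sum_pow_lt_card_sub_one K i hi)

theorem Nat.mul_choose_div_self_eq_choose_pred {n k : ℕ} (hn : 0 < n) (hk : 0 < k)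
    (h : n ∣ n.choose k) : k * (n.choose k / n) = (n - 1).choose (k - 1) := by
  refine Nat.eq_of_mul_eq_mul_left hn ?_
  have := Nat.add_one_mul_choose_eq (n - 1) (k - 1)
  rw [Nat.sub_add_cancel hn, Nat.sub_add_cancel hk] at this
  rw [this, mul_left_comm, Nat.mul_div_cancel' h, mul_comm]

namespace ZMod

theorem natCast_mul_eq_zero_of_castHom_eq_zero (n : ℕ) {x : ZMod (n ^ 2)}
    (hx : castHom (dvd_pow_self n two_ne_zero) (ZMod n) x = 0) : (n : ZMod (n ^ 2)) * x = 0 := by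
  obtain ⟨m, rfl⟩ := intCast_surjective x
  rw [map_intCast, intCast_zmod_eq_zero_iff_dvd] at hx
  obtain ⟨c, rfl⟩ := hx
  rw [← Int.cast_natCast, ← Int.cast_mul, intCast_zmod_eq_zero_iff_dvd]
  exact ⟨c, by push_cast; ring⟩

theorem castHom_inv_of_isUnit {m n : ℕ} (h : m ∣ n) {a : ZMod n} (ha : IsUnit a) :
    castHom h (ZMod m) a⁻¹ = (castHom h (ZMod m) a)⁻¹ :=
  (ZMod.inv_eq_of_mul_eq_one _ _ _ (by rw [← map_mul, mul_inv_of_unit _ ha, map_one])).symm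

section PrimeSquare

variable {p : ℕ}

theorem isUnit_natCast_of_pos_of_lt (hp : p.Prime) {k : ℕ} (hk0 : 0 < k) (hkp : k < p) :
    IsUnit (k : ZMod (p ^ 2)) :=
  (isUnit_natCast_iff_not_dvd_pow hp two_pos).2 (Nat.not_dvd_of_pos_of_lt hk0 hkp)

theorem castHom_natCast_inv (hp : p.Prime) {k : ℕ} (hk0 : 0 < k) (hkp : k < p) :
    castHom (dvd_pow_self p two_ne_zero) (ZMod p) (k : ZMod (p ^ 2))⁻¹ = (k : ZMod p)⁻¹ := by
  rw [castHom_inv_of_isUnit _ (isUnit_natCast_of_pos_of_lt hp hk0 hkp), map_natCast]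

theorem natCast_sq_self : (p : ZMod (p ^ 2)) ^ 2 = 0 := by
  rw [← Nat.cast_pow, natCast_self]

theorem sum_Ico_inv_pow_eq_zero [Fact p.Prime] {i : ℕ} (hi0 : i ≠ 0) (hi : i < p - 1) :
    ∑ k ∈ Ico 1 p, (k : ZMod p)⁻¹ ^ i = 0 := by
  have hp : 0 < p := (Fact.out : p.Prime).pos
  have hrange : ∑ k ∈ range p, (k : ZMod p)⁻¹ ^ i = ∑ x : ZMod p, x⁻¹ ^ i :=
    sum_nbij' (↑) val (fun _ _ => mem_univ _) (fun x _ => mem_range.2 x.val_lt)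
      (fun _ hk => val_cast_of_lt (mem_range.1 hk)) (fun x _ => natCast_zmod_val x)
      (fun _ _ => rfl)
  rw [sum_range_eq_add_Ico _ hp, FiniteField.sum_inv_pow_eq_zero (by rwa [ZMod.card])] at hrange
  simpa [hi0] using hrange

theorem natCast_mul_sum_Ico_inv_sq_eq_zero (hp : p.Prime) (h5 : 5 ≤ p) :
    (p : ZMod (p ^ 2)) * ∑ k ∈ Ico 1 p, (k : ZMod (p ^ 2))⁻¹ ^ 2 = 0 := by
  have := Fact.mk hp
  refine natCast_mul_eq_zero_of_castHom_eq_zero p ?_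
  rw [map_sum, ← sum_Ico_inv_pow_eq_zero two_ne_zero (by omega : 2 < p - 1)]
  refine sum_congr rfl fun k hk => ?_
  rw [mem_Ico] at hk
  rw [map_pow, castHom_natCast_inv hp hk.1 hk.2]

theorem inv_add_inv_of_isUnit {n : ℕ} {a b : ZMod n} (ha : IsUnit a) (hb : IsUnit b) :
    a⁻¹ + b⁻¹ = (a + b) * (a⁻¹ * b⁻¹) := by
  linear_combination (-b⁻¹) * mul_inv_of_unit a ha + (-a⁻¹) * mul_inv_of_unit b hb

theorem sum_Ico_inv_eq_zero (hp : p.Prime) (h5 : 5 ≤ p) :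
    ∑ k ∈ Ico 1 p, (k : ZMod (p ^ 2))⁻¹ = 0 := by
  have := Fact.mk hp
  have hreflect : ∑ k ∈ Ico 1 p, ((p - k : ℕ) : ZMod (p ^ 2))⁻¹ =
      ∑ k ∈ Ico 1 p, (k : ZMod (p ^ 2))⁻¹ := by
    rw [sum_Ico_reflect (fun k => (k : ZMod (p ^ 2))⁻¹) 1 p.le_succ, Nat.add_sub_cancel,
      Nat.add_sub_cancel_left]
  have hpair : ∀ k ∈ Ico 1 p, (k : ZMod (p ^ 2))⁻¹ + ((p - k : ℕ) : ZMod (p ^ 2))⁻¹ =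
      p * ((k : ZMod (p ^ 2))⁻¹ * ((p - k : ℕ) : ZMod (p ^ 2))⁻¹) := fun k hk => by
    rw [mem_Ico] at hk
    rw [inv_add_inv_of_isUnit (isUnit_natCast_of_pos_of_lt hp hk.1 hk.2)
      (isUnit_natCast_of_pos_of_lt hp (by omega) (by omega)),
      ← Nat.cast_add, Nat.add_sub_cancel' hk.2.le]
  -- modulo `p`, the paired terms `1 / (k (p - k))` are `-1 / k²`, which sum to zero
  have hmod : castHom (dvd_pow_self p two_ne_zero) (ZMod p)
      (∑ k ∈ Ico 1 p, (k : ZMod (p ^ 2))⁻¹ * ((p - k : ℕ) : ZMod (p ^ 2))⁻¹) = 0 := by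
    rw [map_sum, ← neg_zero, ← sum_Ico_inv_pow_eq_zero two_ne_zero (by omega : 2 < p - 1),
      ← sum_neg_distrib]
    refine sum_congr rfl fun k hk => ?_
    rw [mem_Ico] at hk
    rw [map_mul, castHom_natCast_inv hp hk.1 hk.2, castHom_natCast_inv hp (by omega) (by omega),
      Nat.cast_sub hk.2.le, natCast_self, zero_sub, inv_neg]
    ring
  have htwo : (2 : ZMod (p ^ 2)) * ∑ k ∈ Ico 1 p, (k : ZMod (p ^ 2))⁻¹ = 0 := by
    rw [two_mul]
    nth_rw 2 [← hreflect]
    rw [← sum_add_distrib, sum_congr rfl hpair, ← mul_sum]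
    exact natCast_mul_eq_zero_of_castHom_eq_zero p hmod
  have hunit_two : IsUnit (2 : ZMod (p ^ 2)) := by
    simpa using isUnit_natCast_of_pos_of_lt hp two_pos (by omega)
  exact hunit_two.mul_right_eq_zero.1 htwo

theorem natCast_choose_pred_eq (hp : p.Prime) {j : ℕ} (hj : j < p) :
    ((p - 1).choose j : ZMod (p ^ 2)) =
      (-1) ^ j * (1 - p * ∑ i ∈ Ico 1 (j + 1), (i : ZMod (p ^ 2))⁻¹) := by
  induction j with
  | zero => simp
  | succ j ih =>
    have hrec := congrArg (Nat.cast : ℕ → ZMod (p ^ 2)) (Nat.choose_succ_right_eq (p - 1) j)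
    rw [show p - 1 - j = p - (j + 1) by omega, Nat.cast_mul, Nat.cast_mul, Nat.cast_sub hj.le,
      ih (by omega)] at hrec
    rw [sum_Ico_succ_top (by omega)]
    set c : ZMod (p ^ 2) := ((j + 1 : ℕ) : ZMod (p ^ 2))
    set H := ∑ i ∈ Ico 1 (j + 1), (i : ZMod (p ^ 2))⁻¹
    have hc := mul_inv_of_unit c (isUnit_natCast_of_pos_of_lt hp j.succ_pos hj)
    linear_combination (-((p - 1).choose (j + 1) : ZMod (p ^ 2)) - (-1) ^ j * (1 - p * H)) * hc
      + c⁻¹ * hrec - (-1) ^ j * H * c⁻¹ * natCast_sq_self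

theorem natCast_mul_sq_choose_div_self (hp : p.Prime) {k : ℕ} (hk0 : 0 < k) (hkp : k < p) :
    ((k * (p.choose k / p) ^ 2 : ℕ) : ZMod (p ^ 2)) =
      (k : ZMod (p ^ 2))⁻¹ -
        2 * p * ((k : ZMod (p ^ 2))⁻¹ * ∑ i ∈ Ico 1 k, (i : ZMod (p ^ 2))⁻¹) := by
  have hchoose := congrArg (Nat.cast : ℕ → ZMod (p ^ 2))
    (Nat.mul_choose_div_self_eq_choose_pred hp.pos hk0 (hp.dvd_choose_self hk0.ne' hkp))
  rw [natCast_choose_pred_eq hp (by omega), Nat.sub_add_cancel hk0, Nat.cast_mul] at hchoose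
  set a : ZMod (p ^ 2) := ((p.choose k / p : ℕ) : ZMod (p ^ 2))
  set H := ∑ i ∈ Ico 1 k, (i : ZMod (p ^ 2))⁻¹
  set s : ZMod (p ^ 2) := (-1) ^ (k - 1)
  have hs : s ^ 2 = 1 := by rw [← pow_mul, mul_comm, pow_mul, neg_one_sq, one_pow]
  have hk := mul_inv_of_unit _ (isUnit_natCast_of_pos_of_lt hp hk0 hkp)
  push_cast
  linear_combination (-(k : ZMod (p ^ 2)) * a ^ 2) * hk
    + (k : ZMod (p ^ 2))⁻¹ * (k * a + s * (1 - p * H)) * hchoose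
    + (k : ZMod (p ^ 2))⁻¹ * (1 - p * H) ^ 2 * hs
    + (k : ZMod (p ^ 2))⁻¹ * H ^ 2 * natCast_sq_self

theorem natCast_sum_Ico_mul_sq_choose_div_self_eq_zero (hp : p.Prime) (h5 : 5 ≤ p) :
    ((∑ k ∈ Ico 1 p, k * (p.choose k / p) ^ 2 : ℕ) : ZMod (p ^ 2)) = 0 := by
  rw [Nat.cast_sum, sum_congr rfl fun k hk => natCast_mul_sq_choose_div_self hp
    (mem_Ico.1 hk).1 (mem_Ico.1 hk).2, sum_sub_distrib, ← mul_sum]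
  linear_combination (p : ZMod (p ^ 2)) * sum_Ico_sq (fun i => (i : ZMod (p ^ 2))⁻¹) 1 p
    + (1 - p * ∑ k ∈ Ico 1 p, (k : ZMod (p ^ 2))⁻¹) * sum_Ico_inv_eq_zero hp h5
    + natCast_mul_sum_Ico_inv_sq_eq_zero hp h5

end PrimeSquare

end ZMod

theorem statement12 (n : ℕ) (hn : n.Prime) (h5 : 5 ≤ n) :
    n ^ 4 ∣ ∑ k ∈ Finset.Ico 1 n, k * (n.choose k) ^ 2 := by
  have hfactor : ∑ k ∈ Ico 1 n, k * (n.choose k) ^ 2 =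
      n ^ 2 * ∑ k ∈ Ico 1 n, k * (n.choose k / n) ^ 2 := by
    rw [mul_sum]
    refine sum_congr rfl fun k hk => ?_
    rw [mem_Ico] at hk
    obtain ⟨c, hc⟩ := hn.dvd_choose_self (by omega) hk.2
    rw [hc, Nat.mul_div_cancel_left _ hn.pos]
    ring
  rw [hfactor, show n ^ 4 = n ^ 2 * n ^ 2 by ring]
  exact mul_dvd_mul_left _
    ((ZMod.natCast_eq_zero_iff _ _).1 (ZMod.natCast_sum_Ico_mul_sq_choose_div_self_eq_zero hn h5))
end
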